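/- (Proposition 2) Let 0 < N < 1 and d > 0 with d² > N⁻² − 1, and let z₀₁ be the unique root of φ(z) = 0 in the interval I₂. Then: if 0 < A < −F(z₀₁), the dispersion relation F(z) + A = 0 has exactly four real solutions z with z² ≠ 1, exactly three of which lie in I₂ and one in I₁; while if A > −F(z₀₁), it has exactly two real solutions, one in I₁ and one in I₂. -/

import Mathlib

/-- `F N d z = (1 - N z)² (1 - d²/(z² - 1))`. -/
noncomputable def F (N d z : ℝ) : ℝ := (1 - N * z) ^ 2 * (1 - d ^ 2 / (z ^ 2 - 1))

/-- `φ N d z = 1/d² + (1 - z/N)/(z² - 1)²`. -/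
noncomputable def phi (N d z : ℝ) : ℝ := 1 / d ^ 2 + (1 - z / N) / (z ^ 2 - 1) ^ 2

/-- The interval `I₁ = (-√(1+d²), -1)`. -/
noncomputable def I₁ (d : ℝ) : Set ℝ := Set.Ioo (-Real.sqrt (1 + d ^ 2)) (-1)

/-- The interval `I₂ = (1, √(1+d²))`. -/
noncomputable def I₂ (d : ℝ) : Set ℝ := Set.Ioo 1 (Real.sqrt (1 + d ^ 2))

/-!
Since `F' = -2 N d² (1 - N z) φ(z)`, the monotonicity of `F` is governed by the signs of `1 - N z`
and `φ`. `F` is negative only on `I₁ ∪ I₂`; there it tends to `-∞` at `±1` and vanishes at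
`±√(1 + d²)`, and moreover `F(1/N) = 0`. On `I₁` both factors are positive, so `F` decreases from
`0` to `-∞` and takes every negative value once. On `I₂`, `φ < 0` before its root `z₀₁` and
`φ > 0` after it, and `1/N < z₀₁` because `φ(1/N) < 0`. Hence `F` rises from `-∞` to `0` on
`(1, 1/N]`, falls to its minimum `F(z₀₁)` on `[1/N, z₀₁]` and rises back to `0` on
`[z₀₁, √(1 + d²)]`: the level `-A` is attained three times or once according as it lies above or
below `F(z₀₁)`.
-/

open Filter Topology Set

section Counting

variable {X : Type*} [TopologicalSpace X] {g : X → ℝ} {s : Set X}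

theorem IsPreconnected.neg_of_ne_zero (hs : IsPreconnected s) (hg : ContinuousOn g s)
    (h0 : ∀ x ∈ s, g x ≠ 0) {a x : X} (ha : a ∈ s) (hga : g a < 0) (hx : x ∈ s) : g x < 0 := by
  by_contra! hgx
  obtain ⟨c, hc, hgc⟩ := hs.intermediate_value ha hx hg ⟨hga.le, hgx⟩
  exact h0 c hc hgc

theorem IsPreconnected.pos_of_ne_zero (hs : IsPreconnected s) (hg : ContinuousOn g s)
    (h0 : ∀ x ∈ s, g x ≠ 0) {a x : X} (ha : a ∈ s) (hga : 0 < g a) (hx : x ∈ s) : 0 < g x := by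
  by_contra! hgx
  obtain ⟨c, hc, hgc⟩ := hs.intermediate_value hx ha hg ⟨hgx, hga.le⟩
  exact h0 c hc hgc

variable {f : ℝ → ℝ} {a b c e y : ℝ}

theorem exists_mem_Ioo_eq_of_tendsto_nhdsGT_atBot (hab : a < b) (hf : ContinuousOn f (Ioc a b))
    (hlim : Tendsto f (𝓝[>] a) atBot) (hy : y < f b) : ∃ x ∈ Ioo a b, f x = y := by
  obtain ⟨x, hx, rfl⟩ := isPreconnected_Ioc.intermediate_value_Iic (right_mem_Ioc.2 hab)
    (le_principal_iff.2 (Ioc_mem_nhdsGT hab)) hf hlim hy.le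
  exact ⟨x, ⟨hx.1, hx.2.lt_of_ne (by rintro rfl; exact lt_irrefl _ hy)⟩, rfl⟩

theorem exists_mem_Ioo_eq_of_tendsto_nhdsLT_atBot (hab : a < b) (hf : ContinuousOn f (Ico a b))
    (hlim : Tendsto f (𝓝[<] b) atBot) (hy : y < f a) : ∃ x ∈ Ioo a b, f x = y := by
  obtain ⟨x, hx, rfl⟩ := isPreconnected_Ico.intermediate_value_Iic (left_mem_Ico.2 hab)
    (le_principal_iff.2 (Ico_mem_nhdsLT hab)) hf hlim hy.le
  exact ⟨x, ⟨hx.1.lt_of_ne (by rintro rfl; exact lt_irrefl _ hy), hx.2⟩, rfl⟩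

theorem ncard_setOf_mem_Ioo_eq_one_of_strictAntiOn (hab : a < b) (hf : ContinuousOn f (Ico a b))
    (hlim : Tendsto f (𝓝[<] b) atBot) (hanti : StrictAntiOn f (Ico a b)) (hy : y < f a) :
    {x | x ∈ Ioo a b ∧ f x = y}.ncard = 1 := by
  obtain ⟨x, hx, hfx⟩ := exists_mem_Ioo_eq_of_tendsto_nhdsLT_atBot hab hf hlim hy
  refine ncard_eq_one.2 ⟨x, Set.ext fun z => ⟨fun ⟨hz, hfz⟩ => ?_, ?_⟩⟩
  · exact hanti.injOn (Ioo_subset_Ico_self hz) (Ioo_subset_Ico_self hx) (hfz.trans hfx.symm)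
  · rintro rfl
    exact ⟨hx, hfx⟩

theorem isMinOn_Icc_of_strictAntiOn_of_strictMonoOn (hbc : b ≤ c) (hce : c ≤ e)
    (hanti : StrictAntiOn f (Icc b c)) (hmono : StrictMonoOn f (Icc c e)) :
    IsMinOn f (Icc b e) c := by
  intro z hz
  rcases le_total z c with hzc | hcz
  · exact hanti.antitoneOn ⟨hz.1, hzc⟩ ⟨hbc, le_rfl⟩ hzc
  · exact hmono.monotoneOn ⟨le_rfl, hce⟩ ⟨hcz, hz.2⟩ hcz

theorem ncard_setOf_mem_Ioo_eq_one_of_lt_min (hab : a < b) (hbc : b ≤ c) (hce : c ≤ e)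
    (hf : ContinuousOn f (Ioc a b)) (hlim : Tendsto f (𝓝[>] a) atBot)
    (h₁ : StrictMonoOn f (Ioc a b)) (h₂ : StrictAntiOn f (Icc b c))
    (h₃ : StrictMonoOn f (Icc c e)) (hy : y < f c) :
    {x | x ∈ Ioo a e ∧ f x = y}.ncard = 1 := by
  have hmin := isMinOn_Icc_of_strictAntiOn_of_strictMonoOn hbc hce h₂ h₃
  obtain ⟨x, hx, hfx⟩ := exists_mem_Ioo_eq_of_tendsto_nhdsGT_atBot hab hf hlim
    (hy.trans_le (hmin ⟨le_rfl, hbc.trans hce⟩))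
  refine ncard_eq_one.2 ⟨x, Set.ext fun z => ⟨fun ⟨hz, hfz⟩ => ?_, ?_⟩⟩
  · have hzb : z ≤ b := by
      by_contra! hbz
      exact (hmin ⟨hbz.le, hz.2.le⟩).not_gt (hfz ▸ hy)
    exact h₁.injOn ⟨hz.1, hzb⟩ (Ioo_subset_Ioc_self hx) (hfz.trans hfx.symm)
  · rintro rfl
    exact ⟨⟨hx.1, hx.2.trans_le (hbc.trans hce)⟩, hfx⟩

theorem ncard_setOf_mem_Ioo_eq_three_of_min_lt (hab : a < b) (hbc : b < c) (hce : c < e)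
    (hf : ContinuousOn f (Ioc a e)) (hlim : Tendsto f (𝓝[>] a) atBot)
    (h₁ : StrictMonoOn f (Ioc a b)) (h₂ : StrictAntiOn f (Icc b c))
    (h₃ : StrictMonoOn f (Icc c e)) (hc : f c < y) (hb : y < f b) (he : y < f e) :
    {x | x ∈ Ioo a e ∧ f x = y}.ncard = 3 := by
  obtain ⟨x₁, hx₁, hfx₁⟩ := exists_mem_Ioo_eq_of_tendsto_nhdsGT_atBot hab
    (hf.mono (Ioc_subset_Ioc_right (hbc.trans hce).le)) hlim hb
  obtain ⟨x₂, hx₂, hfx₂⟩ := intermediate_value_Ioo' hbc.le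
    (hf.mono fun x hx => ⟨hab.trans_le hx.1, hx.2.trans hce.le⟩) ⟨hc, hb⟩
  obtain ⟨x₃, hx₃, hfx₃⟩ := intermediate_value_Ioo hce.le
    (hf.mono fun x hx => ⟨(hab.trans hbc).trans_le hx.1, hx.2⟩) ⟨hc, he⟩
  refine ncard_eq_three.2 ⟨x₁, x₂, x₃, (hx₁.2.trans hx₂.1).ne,
    (hx₁.2.trans (hbc.trans hx₃.1)).ne, (hx₂.2.trans hx₃.1).ne,
    Set.ext fun z => ⟨fun ⟨hz, hfz⟩ => ?_, ?_⟩⟩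
  · rcases le_or_gt z b with hzb | hbz
    · exact .inl (h₁.injOn ⟨hz.1, hzb⟩ (Ioo_subset_Ioc_self hx₁) (hfz.trans hfx₁.symm))
    rcases le_or_gt z c with hzc | hcz
    · exact .inr (.inl (h₂.injOn ⟨hbz.le, hzc⟩ (Ioo_subset_Icc_self hx₂) (hfz.trans hfx₂.symm)))
    · exact .inr (.inr (h₃.injOn ⟨hcz.le, hz.2.le⟩ (Ioo_subset_Icc_self hx₃) (hfz.trans hfx₃.symm)))
  · rintro (rfl | rfl | rfl)
    · exact ⟨⟨hx₁.1, hx₁.2.trans (hbc.trans hce)⟩, hfx₁⟩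
    · exact ⟨⟨hab.trans hx₂.1, hx₂.2.trans hce⟩, hfx₂⟩
    · exact ⟨⟨(hab.trans hbc).trans hx₃.1, hx₃.2⟩, hfx₃⟩

end Counting

section F

variable {N d z : ℝ}

theorem continuousOn_F {s : Set ℝ} (hs : ∀ z ∈ s, z ^ 2 ≠ 1) : ContinuousOn (F N d) s :=
  (continuousOn_const.sub (continuousOn_const.mul continuousOn_id)).pow 2 |>.mul <|
    continuousOn_const.sub <|
      continuousOn_const.div ((continuousOn_id.pow 2).sub continuousOn_const)
        fun z hz => sub_ne_zero.2 (hs z hz)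

theorem hasDerivAt_F (hN : N ≠ 0) (hd : d ≠ 0) (hz : z ^ 2 ≠ 1) :
    HasDerivAt (F N d) (-2 * N * d ^ 2 * (1 - N * z) * phi N d z) z := by
  have hz' : z ^ 2 - 1 ≠ 0 := sub_ne_zero.2 hz
  have h := ((((hasDerivAt_id' z).const_mul N).const_sub 1).fun_pow 2).fun_mul
    (((((hasDerivAt_pow 2 z).sub_const 1).fun_inv hz').const_mul (d ^ 2)).const_sub 1)
  refine (funext fun x => by rw [F, div_eq_mul_inv] : F N d = _) ▸ h.congr_deriv ?_
  simp only [phi]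
  field_simp
  ring

theorem F_eq_zero_of_sq_eq (hd : d ≠ 0) (hz : z ^ 2 = 1 + d ^ 2) : F N d z = 0 := by
  simp [F, hz, hd]

theorem F_inv_self (hN : N ≠ 0) : F N d N⁻¹ = 0 := by
  simp [F, hN]

theorem one_lt_sq_and_sq_lt_of_F_neg (h : F N d z < 0) : 1 < z ^ 2 ∧ z ^ 2 < 1 + d ^ 2 := by
  have hfac : 1 - d ^ 2 / (z ^ 2 - 1) < 0 := neg_of_mul_neg_right h (sq_nonneg _)
  have hpos : 0 < z ^ 2 - 1 := by
    by_contra! h'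
    linarith [div_nonpos_of_nonneg_of_nonpos (sq_nonneg d) h']
  rw [sub_neg, one_lt_div hpos] at hfac
  constructor <;> linarith

theorem mem_I₁_or_mem_I₂_of_F_neg (h : F N d z < 0) : z ∈ I₁ d ∨ z ∈ I₂ d := by
  obtain ⟨h₁, h₂⟩ := one_lt_sq_and_sq_lt_of_F_neg h
  rw [one_lt_sq_iff_one_lt_abs, lt_abs] at h₁
  rw [← sq_abs, ← Real.lt_sqrt (abs_nonneg z), abs_lt] at h₂
  rcases h₁ with h₁ | h₁
  · exact .inr ⟨h₁, h₂.2⟩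
  · exact .inl ⟨h₂.1, by linarith⟩

theorem tendsto_F_atBot {z₀ : ℝ} {l : Filter ℝ} (hd : d ≠ 0) (hN : N * z₀ ≠ 1)
    (hz₀ : z₀ ^ 2 = 1) (hl : l ≤ 𝓝 z₀) (hl₁ : ∀ᶠ z in l, 1 < z ^ 2) :
    Tendsto (F N d) l atBot := by
  have h₁ : Tendsto (fun z => (1 - N * z) ^ 2) l (𝓝 ((1 - N * z₀) ^ 2)) :=
    ((by fun_prop : Continuous fun z : ℝ => (1 - N * z) ^ 2).tendsto z₀).mono_left hl
  have h₂ : Tendsto (fun z : ℝ => z ^ 2 - 1) l (𝓝[>] 0) := by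
    refine tendsto_nhdsWithin_iff.2 ⟨?_, hl₁.mono fun z hz => sub_pos.2 hz⟩
    simpa [hz₀] using ((by fun_prop : Continuous fun z : ℝ => z ^ 2 - 1).tendsto z₀).mono_left hl
  have h₃ : Tendsto (fun z => 1 - d ^ 2 / (z ^ 2 - 1)) l atBot := by
    simpa [div_eq_mul_inv, sub_eq_add_neg] using tendsto_atBot_add_const_left l 1
      (tendsto_neg_atTop_atBot.comp (h₂.inv_tendsto_nhdsGT_zero.const_mul_atTop (by positivity)))
  exact h₁.pos_mul_atBot (sq_pos_of_ne_zero (sub_ne_zero.2 hN.symm)) h₃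

theorem tendsto_F_nhdsGT_one (hd : d ≠ 0) (hN : N ≠ 1) : Tendsto (F N d) (𝓝[>] 1) atBot :=
  tendsto_F_atBot hd (by simpa using hN) (one_pow 2) nhdsWithin_le_nhds
    (eventually_nhdsWithin_of_forall fun _ hz => one_lt_pow₀ hz two_ne_zero)

theorem tendsto_F_nhdsLT_neg_one (hd : d ≠ 0) (hN : N ≠ -1) :
    Tendsto (F N d) (𝓝[<] (-1)) atBot :=
  tendsto_F_atBot hd (by simpa [neg_eq_iff_eq_neg] using hN) (by norm_num) nhdsWithin_le_nhds
    (eventually_nhdsWithin_of_forall fun z (hz : z < -1) => by nlinarith)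

theorem strictMonoOn_F (hN : 0 < N) (hd : d ≠ 0) {s : Set ℝ} (hs : Convex ℝ s)
    (hs₁ : ∀ z ∈ s, z ^ 2 ≠ 1) (hsign : ∀ z ∈ interior s, (1 - N * z) * phi N d z < 0) :
    StrictMonoOn (F N d) s := by
  refine strictMonoOn_of_deriv_pos hs (continuousOn_F hs₁) fun z hz => ?_
  rw [(hasDerivAt_F hN.ne' hd (hs₁ z (interior_subset hz))).deriv, mul_assoc _ (1 - N * z)]
  have := hsign z hz
  have : 0 < N * d ^ 2 := by positivity
  nlinarith

theorem strictAntiOn_F (hN : 0 < N) (hd : d ≠ 0) {s : Set ℝ} (hs : Convex ℝ s)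
    (hs₁ : ∀ z ∈ s, z ^ 2 ≠ 1) (hsign : ∀ z ∈ interior s, 0 < (1 - N * z) * phi N d z) :
    StrictAntiOn (F N d) s := by
  refine strictAntiOn_of_deriv_neg hs (continuousOn_F hs₁) fun z hz => ?_
  rw [(hasDerivAt_F hN.ne' hd (hs₁ z (interior_subset hz))).deriv, mul_assoc _ (1 - N * z)]
  have := hsign z hz
  have : 0 < N * d ^ 2 := by positivity
  nlinarith

end F

section Phi

variable {N d z : ℝ}

theorem continuousOn_phi {s : Set ℝ} (hs : ∀ z ∈ s, z ^ 2 ≠ 1) : ContinuousOn (phi N d) s :=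
  continuousOn_const.add <| (continuousOn_const.sub (continuousOn_id.div_const N)).div
    (((continuousOn_id.pow 2).sub continuousOn_const).pow 2)
    fun z hz => pow_ne_zero 2 (sub_ne_zero.2 (hs z hz))

theorem tendsto_phi_nhdsGT_one (hN : 0 < N) (hN1 : N < 1) :
    Tendsto (phi N d) (𝓝[>] 1) atBot := by
  have h₁ : Tendsto (fun z : ℝ => 1 - z / N) (𝓝[>] 1) (𝓝 (1 - 1 / N)) :=
    ((by fun_prop : Continuous fun z : ℝ => 1 - z / N).tendsto 1).mono_left nhdsWithin_le_nhds
  have h₂ : Tendsto (fun z : ℝ => (z ^ 2 - 1) ^ 2) (𝓝[>] 1) (𝓝[>] 0) := by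
    refine tendsto_nhdsWithin_iff.2 ⟨?_, eventually_nhdsWithin_of_forall fun z (hz : 1 < z) =>
      pow_pos (sub_pos.2 (one_lt_pow₀ hz two_ne_zero)) 2⟩
    simpa using ((by fun_prop : Continuous fun z : ℝ => (z ^ 2 - 1) ^ 2).tendsto 1).mono_left
      nhdsWithin_le_nhds
  have hc : 1 - 1 / N < 0 := sub_neg.2 (one_lt_one_div hN hN1)
  refine (tendsto_atBot_add_const_left _ (1 / d ^ 2)
    (h₁.neg_mul_atTop hc h₂.inv_tendsto_nhdsGT_zero)).congr fun z => ?_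
  rw [phi, div_eq_mul_inv (1 - z / N)]
  rfl

theorem phi_pos_of_lt_neg_one (hN : 0 < N) (hz : z < -1) : 0 < phi N d z := by
  have h₁ : 0 < 1 - z / N := by
    have : z / N < 0 := div_neg_of_neg_of_pos (by linarith) hN
    linarith
  have h₂ : 0 < (z ^ 2 - 1) ^ 2 := pow_pos (by nlinarith) 2
  exact add_pos_of_nonneg_of_pos (by positivity) (div_pos h₁ h₂)

theorem inv_lt_sqrt (hN : 0 < N) (hcase : 1 / N ^ 2 - 1 < d ^ 2) : N⁻¹ < √(1 + d ^ 2) := by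
  rw [Real.lt_sqrt (by positivity), inv_pow, ← one_div]
  linarith

theorem phi_sqrt_pos (hN : 0 < N) (hd : d ≠ 0) (h : N⁻¹ < √(1 + d ^ 2)) :
    0 < phi N d √(1 + d ^ 2) := by
  set r := √(1 + d ^ 2)
  have hr : r ^ 2 = 1 + d ^ 2 := Real.sq_sqrt (by positivity)
  have key : phi N d r = r * (r - N⁻¹) / (d ^ 2) ^ 2 := by
    rw [phi, hr]
    field_simp
    linear_combination -(d ^ 4 * N) * hr
  rw [key]
  have : 0 < r := (inv_pos.2 hN).trans h
  have : 0 < r - N⁻¹ := sub_pos.2 h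
  positivity

theorem phi_inv_neg (hN : 0 < N) (hN1 : N < 1) (hcase : 1 / N ^ 2 - 1 < d ^ 2) :
    phi N d N⁻¹ < 0 := by
  have hu : 0 < 1 / N ^ 2 - 1 := by
    rw [sub_pos, one_lt_div (by positivity)]
    nlinarith
  have key : phi N d N⁻¹ = 1 / d ^ 2 - 1 / (1 / N ^ 2 - 1) := by
    have e₁ : N⁻¹ / N = 1 / N ^ 2 := by field_simp
    rw [phi, e₁, inv_pow, ← one_div, show 1 - 1 / N ^ 2 = -(1 / N ^ 2 - 1) by ring]
    field_simp
    ring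
  rw [key, sub_neg]
  exact one_div_lt_one_div_of_lt hu hcase

end Phi

section Branches

variable {N d a b : ℝ}

theorem strictMonoOn_F_Ioc (hN : 0 < N) (hd : d ≠ 0) (ha : 1 ≤ a) (hb : b ≤ N⁻¹)
    (hφ : ∀ z ∈ Ioo a b, phi N d z < 0) : StrictMonoOn (F N d) (Ioc a b) := by
  refine strictMonoOn_F hN hd (convex_Ioc a b)
    (fun z hz => (one_lt_pow₀ (ha.trans_lt hz.1) two_ne_zero).ne') fun z hz => ?_
  rw [interior_Ioc] at hz
  have hNz : N * z < 1 :=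
    (mul_lt_mul_of_pos_left (hz.2.trans_le hb) hN).trans_eq (mul_inv_cancel₀ hN.ne')
  exact mul_neg_of_pos_of_neg (sub_pos.2 hNz) (hφ z hz)

theorem strictAntiOn_F_Icc (hN : 0 < N) (hd : d ≠ 0) (ha : 1 < a) (ha' : N⁻¹ ≤ a)
    (hφ : ∀ z ∈ Ioo a b, phi N d z < 0) : StrictAntiOn (F N d) (Icc a b) := by
  refine strictAntiOn_F hN hd (convex_Icc a b)
    (fun z hz => (one_lt_pow₀ (ha.trans_le hz.1) two_ne_zero).ne') fun z hz => ?_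
  rw [interior_Icc] at hz
  have hNz : 1 < N * z := (inv_lt_iff_one_lt_mul₀' hN).1 (ha'.trans_lt hz.1)
  exact mul_pos_of_neg_of_neg (sub_neg.2 hNz) (hφ z hz)

theorem strictMonoOn_F_Icc (hN : 0 < N) (hd : d ≠ 0) (ha : 1 < a) (ha' : N⁻¹ ≤ a)
    (hφ : ∀ z ∈ Ioo a b, 0 < phi N d z) : StrictMonoOn (F N d) (Icc a b) := by
  refine strictMonoOn_F hN hd (convex_Icc a b)
    (fun z hz => (one_lt_pow₀ (ha.trans_le hz.1) two_ne_zero).ne') fun z hz => ?_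
  rw [interior_Icc] at hz
  have hNz : 1 < N * z := (inv_lt_iff_one_lt_mul₀' hN).1 (ha'.trans_lt hz.1)
  exact mul_neg_of_neg_of_pos (sub_neg.2 hNz) (hφ z hz)

theorem strictAntiOn_F_Ico_neg_one (hN : 0 < N) (hd : d ≠ 0) (a : ℝ) :
    StrictAntiOn (F N d) (Ico a (-1)) := by
  refine strictAntiOn_F hN hd (convex_Ico a (-1))
    (fun z hz => (by nlinarith [hz.2] : (1 : ℝ) < z ^ 2).ne') fun z hz => ?_
  rw [interior_Ico] at hz
  have hNz : N * z < 0 := mul_neg_of_pos_of_neg hN (by linarith [hz.2])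
  exact mul_pos (by linarith) (phi_pos_of_lt_neg_one hN hz.2)

end Branches

section Root

variable {N d z₀ : ℝ}

theorem phi_neg_of_mem_Ioo (hN : 0 < N) (hN1 : N < 1) (hz₀ : z₀ ∈ I₂ d)
    (huniq : ∀ z ∈ I₂ d, phi N d z = 0 → z = z₀) : ∀ z ∈ Ioo 1 z₀, phi N d z < 0 := by
  have hcont : ContinuousOn (phi N d) (Ioo 1 z₀) :=
    continuousOn_phi fun z hz => (one_lt_pow₀ hz.1 two_ne_zero).ne'
  have hne : ∀ z ∈ Ioo 1 z₀, phi N d z ≠ 0 := fun z hz h =>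
    hz.2.ne (huniq z ⟨hz.1, hz.2.trans hz₀.2⟩ h)
  obtain ⟨a, hφa, ha⟩ := (((tendsto_phi_nhdsGT_one hN hN1).eventually
    (eventually_lt_atBot 0)).and (Ioo_mem_nhdsGT hz₀.1)).exists
  exact fun z hz => isPreconnected_Ioo.neg_of_ne_zero hcont hne ha hφa hz

theorem phi_pos_of_mem_Ioc (hN : 0 < N) (hd : d ≠ 0) (hcase : 1 / N ^ 2 - 1 < d ^ 2)
    (hz₀ : z₀ ∈ I₂ d) (huniq : ∀ z ∈ I₂ d, phi N d z = 0 → z = z₀) :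
    ∀ z ∈ Ioc z₀ √(1 + d ^ 2), 0 < phi N d z := by
  have hr := phi_sqrt_pos (d := d) hN hd (inv_lt_sqrt hN hcase)
  have hcont : ContinuousOn (phi N d) (Ioc z₀ √(1 + d ^ 2)) :=
    continuousOn_phi fun z hz => (one_lt_pow₀ (hz₀.1.trans hz.1) two_ne_zero).ne'
  have hne : ∀ z ∈ Ioc z₀ √(1 + d ^ 2), phi N d z ≠ 0 := by
    intro z hz h
    rcases hz.2.lt_or_eq with hzr | rfl
    · exact hz.1.ne' (huniq z ⟨hz₀.1.trans hz.1, hzr⟩ h)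
    · exact hr.ne' h
  exact fun z hz => isPreconnected_Ioc.pos_of_ne_zero hcont hne (right_mem_Ioc.2 hz₀.2) hr hz

theorem inv_lt_of_phi_eq_zero (hN : 0 < N) (hN1 : N < 1) (hd : d ≠ 0)
    (hcase : 1 / N ^ 2 - 1 < d ^ 2) (hz₀ : z₀ ∈ I₂ d) (hroot : phi N d z₀ = 0)
    (huniq : ∀ z ∈ I₂ d, phi N d z = 0 → z = z₀) : N⁻¹ < z₀ := by
  have hneg := phi_inv_neg (d := d) hN hN1 hcase
  by_contra! h
  rcases h.lt_or_eq with h | rfl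
  · exact hneg.not_gt (phi_pos_of_mem_Ioc hN hd hcase hz₀ huniq _ ⟨h, (inv_lt_sqrt hN hcase).le⟩)
  · exact hneg.ne hroot

theorem strictMonoOn_strictAntiOn_strictMonoOn_F (hN : 0 < N) (hN1 : N < 1) (hd : d ≠ 0)
    (hcase : 1 / N ^ 2 - 1 < d ^ 2) (hz₀ : z₀ ∈ I₂ d) (hroot : phi N d z₀ = 0)
    (huniq : ∀ z ∈ I₂ d, phi N d z = 0 → z = z₀) :
    StrictMonoOn (F N d) (Ioc 1 N⁻¹) ∧ StrictAntiOn (F N d) (Icc N⁻¹ z₀) ∧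
      StrictMonoOn (F N d) (Icc z₀ √(1 + d ^ 2)) := by
  have hN₁ : 1 < N⁻¹ := (one_lt_inv₀ hN).2 hN1
  have hNz := inv_lt_of_phi_eq_zero hN hN1 hd hcase hz₀ hroot huniq
  have hneg := phi_neg_of_mem_Ioo hN hN1 hz₀ huniq
  refine ⟨strictMonoOn_F_Ioc hN hd le_rfl le_rfl fun z hz => hneg z ⟨hz.1, hz.2.trans hNz⟩,
    strictAntiOn_F_Icc hN hd hN₁ le_rfl fun z hz => hneg z ⟨hN₁.trans hz.1, hz.2⟩,
    strictMonoOn_F_Icc hN hd hz₀.1 hNz.le fun z hz => ?_⟩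
  exact phi_pos_of_mem_Ioc hN hd hcase hz₀ huniq z ⟨hz.1, hz.2.le⟩

end Root

section Solutions

variable {N d A : ℝ}

theorem setOf_F_add_eq_zero_eq_union (hA : 0 < A) :
    {z : ℝ | z ^ 2 ≠ 1 ∧ F N d z + A = 0} =
      {z | z ∈ I₁ d ∧ F N d z + A = 0} ∪ {z | z ∈ I₂ d ∧ F N d z + A = 0} := by
  ext z
  constructor
  · rintro ⟨-, h⟩
    exact (mem_I₁_or_mem_I₂_of_F_neg (by linarith)).imp (⟨·, h⟩) (⟨·, h⟩)
  · rintro (⟨hz, h⟩ | ⟨hz, h⟩)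
    · exact ⟨(by nlinarith [hz.2] : (1 : ℝ) < z ^ 2).ne', h⟩
    · exact ⟨(one_lt_pow₀ hz.1 two_ne_zero).ne', h⟩

theorem ncard_setOf_F_add_eq_zero (hA : 0 < A) (h₁ : {z | z ∈ I₁ d ∧ F N d z + A = 0}.Finite)
    (h₂ : {z | z ∈ I₂ d ∧ F N d z + A = 0}.Finite) :
    {z : ℝ | z ^ 2 ≠ 1 ∧ F N d z + A = 0}.ncard =
      {z | z ∈ I₁ d ∧ F N d z + A = 0}.ncard + {z | z ∈ I₂ d ∧ F N d z + A = 0}.ncard := by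
  rw [setOf_F_add_eq_zero_eq_union hA]
  refine ncard_union_eq (disjoint_left.2 fun z hz₁ hz₂ => ?_) h₁ h₂
  exact (hz₁.1.2.trans (neg_one_lt_zero.trans one_pos)).not_gt hz₂.1.1

theorem ncard_setOf_mem_I₁_F_add_eq_zero (hN : 0 < N) (hd : d ≠ 0) (hA : 0 < A) :
    {z | z ∈ I₁ d ∧ F N d z + A = 0}.ncard = 1 := by
  simp only [I₁, add_eq_zero_iff_eq_neg]
  have hr : 1 < √(1 + d ^ 2) := by
    rw [Real.lt_sqrt zero_le_one]
    linarith [sq_pos_of_ne_zero hd]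
  refine ncard_setOf_mem_Ioo_eq_one_of_strictAntiOn (neg_lt_neg hr)
    (continuousOn_F fun z hz => (by nlinarith [hz.2] : (1 : ℝ) < z ^ 2).ne')
    (tendsto_F_nhdsLT_neg_one hd (by linarith)) (strictAntiOn_F_Ico_neg_one hN hd _) ?_
  rw [F_eq_zero_of_sq_eq hd (by rw [neg_sq, Real.sq_sqrt (by positivity)])]
  linarith

end Solutions

/-- Proposition 2: for `0 < N < 1`, `d² > N⁻² - 1`, and `z₀₁` the unique root of
`φ = 0` in `I₂`: if `0 < A < -F(z₀₁)` the dispersion relation has exactly four real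
solutions with `z² ≠ 1` (three in `I₂`, one in `I₁`); if `A > -F(z₀₁)` it has exactly
two (one in `I₁`, one in `I₂`). -/
theorem stmt_10 (N d A z₀₁ : ℝ) (hN : 0 < N) (hN1 : N < 1) (hd : 0 < d)
    (hcase : 1 / N ^ 2 - 1 < d ^ 2)
    (hz₀₁ : z₀₁ ∈ I₂ d) (hroot : phi N d z₀₁ = 0)
    (huniq : ∀ z ∈ I₂ d, phi N d z = 0 → z = z₀₁)
    (hA : 0 < A) :
    (A < -F N d z₀₁ →
      {z : ℝ | z ^ 2 ≠ 1 ∧ F N d z + A = 0}.ncard = 4 ∧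
      {z : ℝ | z ∈ I₂ d ∧ F N d z + A = 0}.ncard = 3 ∧
      {z : ℝ | z ∈ I₁ d ∧ F N d z + A = 0}.ncard = 1) ∧
    (-F N d z₀₁ < A →
      {z : ℝ | z ^ 2 ≠ 1 ∧ F N d z + A = 0}.ncard = 2 ∧
      {z : ℝ | z ∈ I₂ d ∧ F N d z + A = 0}.ncard = 1 ∧
      {z : ℝ | z ∈ I₁ d ∧ F N d z + A = 0}.ncard = 1) := by
  have hN₁ : 1 < N⁻¹ := (one_lt_inv₀ hN).2 hN1
  have hNz := inv_lt_of_phi_eq_zero hN hN1 hd.ne' hcase hz₀₁ hroot huniq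
  obtain ⟨hF₁, hF₂, hF₃⟩ :=
    strictMonoOn_strictAntiOn_strictMonoOn_F hN hN1 hd.ne' hcase hz₀₁ hroot huniq
  have hcont : ContinuousOn (F N d) (Ioc 1 √(1 + d ^ 2)) :=
    continuousOn_F fun z hz => (one_lt_pow₀ hz.1 two_ne_zero).ne'
  have hlim := tendsto_F_nhdsGT_one hd.ne' hN1.ne
  have hS₁ := ncard_setOf_mem_I₁_F_add_eq_zero hN hd.ne' hA
  have hcount := ncard_setOf_F_add_eq_zero hA (finite_of_ncard_ne_zero (by rw [hS₁]; norm_num))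
  rw [hS₁] at hcount ⊢
  simp only [I₂, add_eq_zero_iff_eq_neg] at hcount ⊢
  refine ⟨fun hlt => ?_, fun hgt => ?_⟩
  · have hS₂ := ncard_setOf_mem_Ioo_eq_three_of_min_lt hN₁ hNz hz₀₁.2 hcont hlim hF₁ hF₂ hF₃
      (lt_neg.1 hlt) (by rw [F_inv_self hN.ne']; linarith)
      (by rw [F_eq_zero_of_sq_eq hd.ne' (Real.sq_sqrt (by positivity))]; linarith)
    rw [hcount (finite_of_ncard_ne_zero (by rw [hS₂]; norm_num)), hS₂]
    exact ⟨rfl, rfl, trivial⟩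
  · have hS₂ := ncard_setOf_mem_Ioo_eq_one_of_lt_min hN₁ hNz.le hz₀₁.2.le
      (hcont.mono (Ioc_subset_Ioc_right (hNz.trans hz₀₁.2).le)) hlim hF₁ hF₂ hF₃ (neg_lt.1 hgt)
    rw [hcount (finite_of_ncard_ne_zero (by rw [hS₂]; norm_num)), hS₂]
    exact ⟨rfl, rfl, trivial⟩
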